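/- arXiv:1309.4565 — 2 statements merged into one kernel-verified Lean document; each statement's English description precedes it below -/
import Mathlib

section
/- Let V be a symplectic ℚ-vector space with Lagrangian subspace L. For each isotropic complement E of L, let θ_E: V × V → ℚ be defined by θ_E(l₁+e₁, l₂+e₂) = ⟨l₂,e₁⟩ (decomposing along V = L ⊕ E). Then for any two isotropic complements E, F of L, the form θ_E restricted to F × F is symmetric. -/
/-! Write `x = l₁ + e₁` and `y = l₂ + e₂` along `V = L ⊕ E`. Since `L` and `E` are isotropic,
`B x y = B l₁ e₂ + B e₁ l₂ = θ_E y x - θ_E x y` by skew-symmetry, so `θ_E` fails to be symmetric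
exactly by `B`; on the isotropic subspace `F` the defect vanishes. -/

theorem LinearMap.IsAlt.apply_swap_sub_apply_of_isCompl {R M : Type*} [CommRing R]
    [AddCommGroup M] [Module R M] {B θ : M →ₗ[R] M →ₗ[R] R} (hB : B.IsAlt)
    {L E : Submodule R M} (hLE : IsCompl L E)
    (hL : ∀ x ∈ L, ∀ y ∈ L, B x y = 0) (hE : ∀ x ∈ E, ∀ y ∈ E, B x y = 0)
    (hθ : ∀ (l₁ l₂ : L) (e₁ e₂ : E),
      θ ((l₁ : M) + (e₁ : M)) ((l₂ : M) + (e₂ : M)) = B (l₂ : M) (e₁ : M))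
    (x y : M) : θ y x - θ x y = B x y := by
  obtain ⟨l₁, e₁, hl₁, he₁, rfl⟩ := Submodule.codisjoint_iff_exists_add_eq.mp hLE.codisjoint x
  obtain ⟨l₂, e₂, hl₂, he₂, rfl⟩ := Submodule.codisjoint_iff_exists_add_eq.mp hLE.codisjoint y
  rw [hθ ⟨l₁, hl₁⟩ ⟨l₂, hl₂⟩ ⟨e₁, he₁⟩ ⟨e₂, he₂⟩, hθ ⟨l₂, hl₂⟩ ⟨l₁, hl₁⟩ ⟨e₂, he₂⟩ ⟨e₁, he₁⟩]
  simp only [map_add, LinearMap.add_apply, hL l₁ hl₁ l₂ hl₂, hE e₁ he₁ e₂ he₂, ← hB.neg l₂ e₁]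
  ring

theorem stmt_7_general {V : Type*} [AddCommGroup V] [Module ℚ V]
    (B : V →ₗ[ℚ] V →ₗ[ℚ] ℚ)
    (halt : ∀ x : V, B x x = 0)
    (L E F : Submodule ℚ V) (hE : IsCompl L E)
    (hLiso : ∀ x ∈ L, ∀ y ∈ L, B x y = 0)
    (hEiso : ∀ x ∈ E, ∀ y ∈ E, B x y = 0)
    (hFiso : ∀ x ∈ F, ∀ y ∈ F, B x y = 0)
    (θE : V →ₗ[ℚ] V →ₗ[ℚ] ℚ)
    (hθE : ∀ (l₁ l₂ : L) (e₁ e₂ : E),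
      θE ((l₁ : V) + (e₁ : V)) ((l₂ : V) + (e₂ : V)) = B (l₂ : V) (e₁ : V)) :
    ∀ x ∈ F, ∀ y ∈ F, θE x y = θE y x := by
  intro x hx y hy
  have hdefect := LinearMap.IsAlt.apply_swap_sub_apply_of_isCompl halt hE hLiso hEiso hθE x y
  rw [hFiso x hx y hy, sub_eq_zero] at hdefect
  exact hdefect.symm

/-- For a symplectic `ℚ`-vector space with Lagrangian `L` and isotropic
complements `E`, `F` of `L`, the form `θ_E` (defined via `V = L ⊕ E`)
restricted to `F × F` is symmetric. -/
theorem stmt_7 {V : Type*} [AddCommGroup V] [Module ℚ V] [FiniteDimensional ℚ V]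
    (B : V →ₗ[ℚ] V →ₗ[ℚ] ℚ)
    (halt : ∀ x : V, B x x = 0)
    (hnd : ∀ x : V, (∀ y : V, B x y = 0) → x = 0)
    (L E F : Submodule ℚ V) (hE : IsCompl L E) (hF : IsCompl L F)
    (hLiso : ∀ x ∈ L, ∀ y ∈ L, B x y = 0)
    (hLdim : 2 * Module.finrank ℚ L = Module.finrank ℚ V)
    (hEiso : ∀ x ∈ E, ∀ y ∈ E, B x y = 0)
    (hFiso : ∀ x ∈ F, ∀ y ∈ F, B x y = 0)
    (θE : V →ₗ[ℚ] V →ₗ[ℚ] ℚ)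
    (hθE : ∀ (l₁ l₂ : L) (e₁ e₂ : E),
      θE ((l₁ : V) + (e₁ : V)) ((l₂ : V) + (e₂ : V)) = B (l₂ : V) (e₁ : V)) :
    ∀ x ∈ F, ∀ y ∈ F, θE x y = θE y x :=
  stmt_7_general B halt L E F hE hLiso hEiso hFiso θE hθE
end

section
/- Let V = L ⊕ E = L ⊕ F = L ⊕ G be a symplectic ℚ-vector space where L is Lagrangian and E, F, G are isotropic complements of L, and let θ_E denote the form θ_E(l₁+e₁, l₂+e₂) = ⟨l₂,e₁⟩ relative to the decomposition V = L ⊕ E. Denote by f: V → L and g: V → L the analogous constructions, and let φ_{GF}: G → F be the isomorphism given by including G into V and projecting to F along L (and similarly φ_{GE}, φ_{FE}). Then for all x, y ∈ G: θ_E(x, y) = θ_F(x, y) + θ_E(φ_{GF}(x), φ_{GF}(y)). -/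
/-!
Write `x = a + e` and `y = b + f` in `L ⊕ E`, so that `θ_E(x, y) = ⟨b, e⟩`. The projections
`x' = φ_{GF}(x)`, `y' = φ_{GF}(y)` have the same `E`-components `e`, `f` and `L`-components
shifted by `x - x'`, `y - y'`. Hence `θ_E(x', y') = ⟨b - (y - y'), e⟩`, while
`θ_F(x, y) = ⟨y - y', x'⟩ = ⟨y - y', e⟩` because `L` is isotropic and `x' - e ∈ L`.
-/

section ThetaForm

variable {R M N : Type*} [CommRing R] [AddCommGroup M] [Module R M] [AddCommGroup N] [Module R N]
  (B : M →ₗ[R] M →ₗ[R] N) {L X : Submodule R M}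

theorem LinearMap.apply_eq_of_sub_mem_of_isotropic (hL : ∀ x ∈ L, ∀ y ∈ L, B x y = 0)
    {l u v : M} (hl : l ∈ L) (huv : u - v ∈ L) : B l u = B l v := by
  rw [← sub_eq_zero, ← map_sub, hL l hl _ huv]

theorem LinearMap.theta_eq_of_sub_mem {θ : M →ₗ[R] M →ₗ[R] N}
    (hθ : ∀ (l₁ l₂ : L) (x₁ x₂ : X), θ ((l₁ : M) + x₁) ((l₂ : M) + x₂) = B l₂ x₁)
    {u v ξ η : M} (hξ : ξ ∈ X) (hη : η ∈ X) (hu : u - ξ ∈ L) (hv : v - η ∈ L) :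
    θ u v = B (v - η) ξ := by
  simpa using hθ ⟨u - ξ, hu⟩ ⟨v - η, hv⟩ ⟨ξ, hξ⟩ ⟨η, hη⟩

omit B in
theorem Submodule.exists_mem_sub_mem_of_isCompl (h : IsCompl L X) (v : M) :
    ∃ ξ ∈ X, v - ξ ∈ L := by
  obtain ⟨l, ξ, hl, hξ, rfl⟩ := Submodule.codisjoint_iff_exists_add_eq.mp h.codisjoint v
  exact ⟨ξ, hξ, by simpa using hl⟩

end ThetaForm

theorem stmt_8_general {V : Type*} [AddCommGroup V] [Module ℚ V]
    (B : V →ₗ[ℚ] V →ₗ[ℚ] ℚ)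
    (L E F G : Submodule ℚ V)
    (hE : IsCompl L E)
    (hLiso : ∀ x ∈ L, ∀ y ∈ L, B x y = 0)
    (θE θF : V →ₗ[ℚ] V →ₗ[ℚ] ℚ)
    (hθE : ∀ (l₁ l₂ : L) (e₁ e₂ : E),
      θE ((l₁ : V) + (e₁ : V)) ((l₂ : V) + (e₂ : V)) = B (l₂ : V) (e₁ : V))
    (hθF : ∀ (l₁ l₂ : L) (f₁ f₂ : F),
      θF ((l₁ : V) + (f₁ : V)) ((l₂ : V) + (f₂ : V)) = B (l₂ : V) (f₁ : V)) :
    ∀ x ∈ G, ∀ y ∈ G, ∀ x' ∈ F, ∀ y' ∈ F,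
      x - x' ∈ L → y - y' ∈ L →
      θE x y = θF x y + θE x' y' := by
  intro x _ y _ x' hx' y' hy' hxx' hyy'
  obtain ⟨e, he, hxe⟩ := Submodule.exists_mem_sub_mem_of_isCompl hE x
  obtain ⟨f, hf, hyf⟩ := Submodule.exists_mem_sub_mem_of_isCompl hE y
  have hx'e : x' - e ∈ L := by simpa using L.sub_mem hxe hxx'
  have hy'f : y' - f ∈ L := by simpa using L.sub_mem hyf hyy'
  rw [B.theta_eq_of_sub_mem hθE he hf hxe hyf, B.theta_eq_of_sub_mem hθF hx' hy' hxx' hyy',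
    B.theta_eq_of_sub_mem hθE he hf hx'e hy'f,
    B.apply_eq_of_sub_mem_of_isotropic hLiso hyy' hx'e, ← LinearMap.add_apply, ← map_add]
  congr 2
  abel

/-- Transitivity relation for the forms `θ_E, θ_F` attached to isotropic
complements `E, F, G` of a Lagrangian `L`: for `x, y ∈ G` with images
`x', y' ∈ F` under the projection along `L`,
`θ_E(x, y) = θ_F(x, y) + θ_E(x', y')`. -/
theorem stmt_8 {V : Type*} [AddCommGroup V] [Module ℚ V] [FiniteDimensional ℚ V]
    (B : V →ₗ[ℚ] V →ₗ[ℚ] ℚ)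
    (halt : ∀ x : V, B x x = 0)
    (hnd : ∀ x : V, (∀ y : V, B x y = 0) → x = 0)
    (L E F G : Submodule ℚ V)
    (hE : IsCompl L E) (hF : IsCompl L F) (hG : IsCompl L G)
    (hLiso : ∀ x ∈ L, ∀ y ∈ L, B x y = 0)
    (hLdim : 2 * Module.finrank ℚ L = Module.finrank ℚ V)
    (hEiso : ∀ x ∈ E, ∀ y ∈ E, B x y = 0)
    (hFiso : ∀ x ∈ F, ∀ y ∈ F, B x y = 0)
    (hGiso : ∀ x ∈ G, ∀ y ∈ G, B x y = 0)
    (θE θF : V →ₗ[ℚ] V →ₗ[ℚ] ℚ)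
    (hθE : ∀ (l₁ l₂ : L) (e₁ e₂ : E),
      θE ((l₁ : V) + (e₁ : V)) ((l₂ : V) + (e₂ : V)) = B (l₂ : V) (e₁ : V))
    (hθF : ∀ (l₁ l₂ : L) (f₁ f₂ : F),
      θF ((l₁ : V) + (f₁ : V)) ((l₂ : V) + (f₂ : V)) = B (l₂ : V) (f₁ : V)) :
    ∀ x ∈ G, ∀ y ∈ G, ∀ x' ∈ F, ∀ y' ∈ F,
      x - x' ∈ L → y - y' ∈ L →
      θE x y = θF x y + θE x' y' :=
  stmt_8_general B L E F G hE hLiso θE θF hθE hθF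
end
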